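/- Let v₀, …, v_n be positive reals, u₁, …, u_n ∈ [0,1], and define the backward Metropolis runs A₀, …, A_n from them. Then A_k ≥ A_{k+1} for every 0 ≤ k < n. Equivalently, setting Ŷ_i := 1/A_{n−i} for 0 ≤ i ≤ n, the sequence Ŷ₀, Ŷ₁, …, Ŷ_n is nonincreasing: Ŷ_i ≤ Ŷ_{i−1} for all 1 ≤ i ≤ n. -/

import Mathlib

/-!
The Metropolis update `metroF w w' u` is monotone in the current weight `w` and, for `u ≤ 1`,
never drops below the proposal `w'` (a rejection only happens when `w' < w`). The run started
at `k + 1` begins at `v (k + 1) ≤ metroF (v k) (v (k + 1)) (u (k + 1))`, the state after one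
step of the run started at `k`; from then on both runs see the same pairs `(v j, u j)`, so
monotonicity keeps the later run below the earlier one.
-/

open MeasureTheory

/-- The Metropolis weight update: from current weight `w`, proposed weight `w'`, and
uniform draw `u`, accept the proposal iff `u ≤ min 1 (w'/w)`. -/
noncomputable def metroF (w w' u : ℝ) : ℝ := if u ≤ min 1 (w' / w) then w' else w

/-- The chain started at index `k`, after `m` steps: `B k = v k`,
`B (k+m+1) = f (B (k+m)) (v (k+m+1)) (u (k+m+1))`. -/
noncomputable def backB (v u : ℕ → ℝ) (k : ℕ) : ℕ → ℝ
  | 0 => v k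
  | m + 1 => metroF (backB v u k m) (v (k + m + 1)) (u (k + m + 1))

/-- The backward Metropolis run started at index `k ≤ n`: start at `v k` and apply the
Metropolis updates with proposals `v (k+1), …, v n` and draws `u (k+1), …, u n`; runs
started at different indices share the same pair `(v j, u j)` at each step `j`. -/
noncomputable def backA (v u : ℕ → ℝ) (n k : ℕ) : ℝ := backB v u k (n - k)

section Metropolis

variable {w w' u a b : ℝ}

lemma metroF_pos (hw : 0 < w) (hw' : 0 < w') : 0 < metroF w w' u := by
  unfold metroF
  split_ifs <;> assumption

lemma metroF_le_max : metroF w w' u ≤ max w w' := by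
  unfold metroF
  split_ifs
  · exact le_max_right w w'
  · exact le_max_left w w'

lemma lt_of_not_le_min_one_div (hw : 0 < w) (hu : u ≤ 1) (hrej : ¬u ≤ min 1 (w' / w)) :
    w' < w := by
  have hlt : w' / w < 1 := by
    rw [not_le, min_lt_iff] at hrej
    rcases hrej with h | h <;> linarith
  exact (div_lt_one hw).mp hlt

lemma le_metroF (hw : 0 < w) (hu : u ≤ 1) : w' ≤ metroF w w' u := by
  unfold metroF
  split_ifs with hacc
  · exact le_rfl
  · exact (lt_of_not_le_min_one_div hw hu hacc).le

lemma metroF_le_metroF (ha : 0 < a) (hab : a ≤ b) (hw' : 0 ≤ w') (hu : u ≤ 1) :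
    metroF a w' u ≤ metroF b w' u := by
  by_cases hacc : u ≤ min 1 (w' / b)
  · have hacc' : u ≤ min 1 (w' / a) :=
      hacc.trans (min_le_min le_rfl (div_le_div_of_nonneg_left hw' ha hab))
    simp only [metroF, if_pos hacc, if_pos hacc', le_refl]
  · have hw'b : w' < b := lt_of_not_le_min_one_div (ha.trans_le hab) hu hacc
    calc metroF a w' u ≤ max a w' := metroF_le_max
      _ ≤ b := max_le hab hw'b.le
      _ = metroF b w' u := (if_neg hacc).symm

end Metropolis

section BackwardRuns

variable {v u : ℕ → ℝ}

lemma backB_pos (hv : ∀ i, 0 < v i) (k m : ℕ) : 0 < backB v u k m := by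
  induction m with
  | zero => exact hv k
  | succ m ih => exact metroF_pos ih (hv _)

lemma backB_succ_start_le (hv : ∀ i, 0 < v i) (hu : ∀ i, u i ≤ 1) (k m : ℕ) :
    backB v u (k + 1) m ≤ backB v u k (m + 1) := by
  induction m with
  | zero => exact le_metroF (hv k) (hu _)
  | succ m ih =>
    have hidx : k + 1 + m + 1 = k + (m + 1) + 1 := by ring
    change metroF _ (v (k + 1 + m + 1)) (u (k + 1 + m + 1)) ≤ metroF _ _ _
    rw [hidx]
    exact metroF_le_metroF (backB_pos hv _ _) ih (hv _).le (hu _)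

lemma backA_succ_le (hv : ∀ i, 0 < v i) (hu : ∀ i, u i ≤ 1) {n k : ℕ} (hk : k < n) :
    backA v u n (k + 1) ≤ backA v u n k := by
  have hsteps : n - k = n - (k + 1) + 1 := by omega
  rw [backA, backA, hsteps]
  exact backB_succ_start_le hv hu k _

end BackwardRuns

/-- **Backward runs are monotone in the starting index.** `A k ≥ A (k+1)` for every
`0 ≤ k < n`; equivalently, the estimates `Ŷ i = 1 / A (n - i)` are nonincreasing in `i`. -/
theorem backward_runs_monotone
    (n : ℕ) (v u : ℕ → ℝ) (hv : ∀ i, 0 < v i)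
    (hu : ∀ i, u i ∈ Set.Icc (0 : ℝ) 1) :
    (∀ k, k < n → backA v u n (k + 1) ≤ backA v u n k) ∧
    (∀ i, 1 ≤ i → i ≤ n →
      1 / backA v u n (n - i) ≤ 1 / backA v u n (n - (i - 1))) := by
  have hu₁ : ∀ i, u i ≤ 1 := fun i => (hu i).2
  refine ⟨fun k hk => backA_succ_le hv hu₁ hk, fun i hi hin => ?_⟩
  have hidx : n - (i - 1) = n - i + 1 := by omega
  rw [hidx]
  exact one_div_le_one_div_of_le (backB_pos hv _ _) (backA_succ_le hv hu₁ (by omega))
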